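/- No quadratic invariant in even dimension: for every m ≥ 1 put n = 2m. If B' is a symmetric bilinear form on ℝⁿ such that B'(Ax, y) + B'(x, Ay) = 0 for all x, y ∈ ℝⁿ and all A ∈ {E₊, E₋, E₀}, then B' = 0. -/

import Mathlib

/-!
`E₀` acts on the standard basis vector `eᵢ` with weight `2i - (n - 1)`, so an invariant form
can pair `eᵢ` with `eⱼ` only when `i + j = n - 1`. On that antidiagonal, `E₊`-invariance gives
`(j + 1) B(eᵢ, eⱼ₊₁) + (i + 1) B(eᵢ₊₁, eⱼ) = 0` with positive coefficients, so the antidiagonal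
entries vanish all together or not at all. For `n = 2m` the relation at the centre `i = j = m - 1`
together with symmetry reads `2m B(eₘ₋₁, eₘ) = 0`, which kills the whole antidiagonal.
-/

/-- `E₊` of the `n`-dimensional irreducible representation of `sl(2,ℝ)`:
`(E₊)_{i,i+1} = n−1−i`, other entries zero. -/
noncomputable def EplusN (n : ℕ) : Matrix (Fin n) (Fin n) ℝ :=
  Matrix.of fun i j => if (i : ℕ) + 1 = (j : ℕ) then (n : ℝ) - 1 - (i : ℕ) else 0

/-- `E₋`: `(E₋)_{i+1,i} = i+1`, other entries zero. -/
noncomputable def EminusN (n : ℕ) : Matrix (Fin n) (Fin n) ℝ :=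
  Matrix.of fun i j => if (i : ℕ) = (j : ℕ) + 1 then ((i : ℕ) : ℝ) else 0

/-- `E₀ = diag(2i − (n−1))`. -/
noncomputable def EzeroN (n : ℕ) : Matrix (Fin n) (Fin n) ℝ :=
  Matrix.of fun i j => if i = j then 2 * ((i : ℕ) : ℝ) - ((n : ℝ) - 1) else 0

open Matrix

theorem LinearMap.apply_eq_zero_of_eigenvalue_add_ne_zero {K V : Type*} [Field K]
    [AddCommGroup V] [Module K V] (B : V →ₗ[K] V →ₗ[K] K) {f : V → V}
    (hf : ∀ x y, B (f x) y + B x (f y) = 0) {x y : V} {a b : K} (hx : f x = a • x)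
    (hy : f y = b • y) (hab : a + b ≠ 0) : B x y = 0 := by
  have h := hf x y
  rw [hx, hy, map_smul, LinearMap.smul_apply, map_smul, smul_eq_mul, smul_eq_mul,
    ← add_mul] at h
  exact (mul_eq_zero.mp h).resolve_left hab

/-- The `k`-th standard basis vector, read as `0` when `k ≥ n`; this makes the action of
`E₊` and `E₀` on it uniform in `k`. -/
def singleNat (n k : ℕ) : Fin n → ℝ := fun i => if (i : ℕ) = k then 1 else 0

theorem singleNat_eq_single {n k : ℕ} (hk : k < n) : singleNat n k = Pi.single ⟨k, hk⟩ 1 := by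
  ext j
  simp [singleNat, Pi.single_apply, Fin.ext_iff]

theorem singleNat_of_le {n k : ℕ} (hk : n ≤ k) : singleNat n k = 0 := by
  funext i
  exact if_neg (by omega)

theorem mulVec_singleNat_apply {n k : ℕ} (M : Matrix (Fin n) (Fin n) ℝ) (hk : k < n)
    (i : Fin n) : (M *ᵥ singleNat n k) i = M i ⟨k, hk⟩ := by
  rw [singleNat_eq_single hk, mulVec_single_one]
  rfl

theorem EzeroN_mulVec_singleNat (n k : ℕ) :
    EzeroN n *ᵥ singleNat n k = (2 * (k : ℝ) - ((n : ℝ) - 1)) • singleNat n k := by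
  by_cases hk : k < n
  · ext i
    rw [mulVec_singleNat_apply _ hk]
    simp only [EzeroN, Fin.ext_iff, of_apply, Pi.smul_apply, singleNat, smul_eq_mul, mul_ite,
      mul_one, mul_zero]
    split_ifs <;> simp_all
  · simp [singleNat_of_le (not_lt.mp hk)]

theorem EplusN_mulVec_singleNat_succ (n k : ℕ) :
    EplusN n *ᵥ singleNat n (k + 1) = ((n : ℝ) - 1 - k) • singleNat n k := by
  by_cases hk : k + 1 < n
  · ext i
    rw [mulVec_singleNat_apply _ hk]
    simp only [EplusN, of_apply, Nat.add_right_cancel_iff, Pi.smul_apply, singleNat,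
      smul_eq_mul, mul_ite, mul_one, mul_zero]
    split_ifs <;> simp_all
  · obtain rfl | hk' : k + 1 = n ∨ n ≤ k := by omega
    · simp [singleNat_of_le le_rfl]
    · simp [singleNat_of_le hk', singleNat_of_le (hk'.trans k.le_succ)]

section InvariantForm

variable {n : ℕ} (B : (Fin n → ℝ) →ₗ[ℝ] (Fin n → ℝ) →ₗ[ℝ] ℝ)

theorem apply_singleNat_eq_zero_of_ne
    (hzero : ∀ x y, B (EzeroN n *ᵥ x) y + B x (EzeroN n *ᵥ y) = 0) {i j : ℕ}
    (hij : i + j + 1 ≠ n) : B (singleNat n i) (singleNat n j) = 0 := by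
  refine B.apply_eq_zero_of_eigenvalue_add_ne_zero hzero (EzeroN_mulVec_singleNat n i)
    (EzeroN_mulVec_singleNat n j) fun h => hij ?_
  exact_mod_cast (by linarith : (i : ℝ) + j + 1 = n)

theorem apply_singleNat_antidiagonal_recurrence
    (hplus : ∀ x y, B (EplusN n *ᵥ x) y + B x (EplusN n *ᵥ y) = 0) {i j : ℕ}
    (hij : i + j + 2 = n) :
    ((j : ℝ) + 1) * B (singleNat n i) (singleNat n (j + 1)) +
      ((i : ℝ) + 1) * B (singleNat n (i + 1)) (singleNat n j) = 0 := by
  have h := hplus (singleNat n (i + 1)) (singleNat n (j + 1))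
  have hn : (n : ℝ) = i + j + 2 := by exact_mod_cast hij.symm
  rw [EplusN_mulVec_singleNat_succ, EplusN_mulVec_singleNat_succ, map_smul,
    LinearMap.smul_apply, map_smul, smul_eq_mul, smul_eq_mul, hn] at h
  linear_combination h

theorem apply_singleNat_antidiagonal_eq_zero_iff
    (hplus : ∀ x y, B (EplusN n *ᵥ x) y + B x (EplusN n *ᵥ y) = 0) (i : ℕ) :
    ∀ j, i + j + 1 = n → (B (singleNat n i) (singleNat n j) = 0 ↔
      B (singleNat n 0) (singleNat n (i + j)) = 0) := by
  induction i with
  | zero => simp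
  | succ i ih =>
    intro j hij
    have hrec := apply_singleNat_antidiagonal_recurrence B hplus (i := i) (j := j) (by omega)
    rw [show i + 1 + j = i + (j + 1) by omega, ← ih (j + 1) (by omega)]
    constructor <;> intro h
    · rw [h, mul_zero, add_zero] at hrec
      exact (mul_eq_zero.mp hrec).resolve_left (by positivity)
    · rw [h, mul_zero, zero_add] at hrec
      exact (mul_eq_zero.mp hrec).resolve_left (by positivity)

end InvariantForm

theorem apply_singleNat_eq_zero_of_even {m : ℕ}
    (B : (Fin (2 * m) → ℝ) →ₗ[ℝ] (Fin (2 * m) → ℝ) →ₗ[ℝ] ℝ)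
    (hsymm : ∀ x y, B x y = B y x)
    (hplus : ∀ x y, B (EplusN (2 * m) *ᵥ x) y + B x (EplusN (2 * m) *ᵥ y) = 0)
    (hzero : ∀ x y, B (EzeroN (2 * m) *ᵥ x) y + B x (EzeroN (2 * m) *ᵥ y) = 0) (i j : ℕ) :
    B (singleNat (2 * m) i) (singleNat (2 * m) j) = 0 := by
  rcases ne_or_eq (i + j + 1) (2 * m) with hij | hij
  · exact apply_singleNat_eq_zero_of_ne B hzero hij
  obtain ⟨p, rfl⟩ : ∃ p, m = p + 1 := ⟨m - 1, by omega⟩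
  have hmid : B (singleNat _ p) (singleNat _ (p + 1)) = 0 := by
    have h := apply_singleNat_antidiagonal_recurrence B hplus (i := p) (j := p) (by omega)
    rw [hsymm (singleNat _ (p + 1)), ← add_mul, ← two_mul] at h
    exact (mul_eq_zero.mp h).resolve_left (by positivity)
  rw [apply_singleNat_antidiagonal_eq_zero_iff B hplus i j hij,
    show i + j = p + (p + 1) by omega,
    ← apply_singleNat_antidiagonal_eq_zero_iff B hplus p (p + 1) (by omega)]
  exact hmid

theorem stmt18_general (m : ℕ)
    (B' : (Fin (2 * m) → ℝ) →ₗ[ℝ] (Fin (2 * m) → ℝ) →ₗ[ℝ] ℝ)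
    (hsymm : ∀ x y : Fin (2 * m) → ℝ, B' x y = B' y x)
    (hinv : ∀ A ∈ ({EplusN (2 * m), EminusN (2 * m), EzeroN (2 * m)} :
          Set (Matrix (Fin (2 * m)) (Fin (2 * m)) ℝ)),
      ∀ x y : Fin (2 * m) → ℝ, B' (A.mulVec x) y + B' x (A.mulVec y) = 0) :
    ∀ x y : Fin (2 * m) → ℝ, B' x y = 0 := by
  have hB : B' = 0 := by
    refine LinearMap.ext_basis (Pi.basisFun ℝ _) (Pi.basisFun ℝ _) fun i j => ?_
    simpa [← singleNat_eq_single i.isLt, ← singleNat_eq_single j.isLt] using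
      apply_singleNat_eq_zero_of_even B' hsymm (hinv _ (by simp)) (hinv _ (by simp)) i j
  simp [hB]

/-- No quadratic invariant in even dimension `n = 2m`: any symmetric bilinear form
invariant under the irreducible `sl(2,ℝ)` vanishes. -/
theorem stmt18 (m : ℕ) (hm : 1 ≤ m)
    (B' : (Fin (2 * m) → ℝ) →ₗ[ℝ] (Fin (2 * m) → ℝ) →ₗ[ℝ] ℝ)
    (hsymm : ∀ x y : Fin (2 * m) → ℝ, B' x y = B' y x)
    (hinv : ∀ A ∈ ({EplusN (2 * m), EminusN (2 * m), EzeroN (2 * m)} :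
          Set (Matrix (Fin (2 * m)) (Fin (2 * m)) ℝ)),
      ∀ x y : Fin (2 * m) → ℝ, B' (A.mulVec x) y + B' x (A.mulVec y) = 0) :
    ∀ x y : Fin (2 * m) → ℝ, B' x y = 0 :=
  stmt18_general m B' hsymm hinv
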